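/- For 1 < p < ∞, the function f : [0,1] → ℓᵖ mapping an enumeration of the rationals in [0,1] to the standard unit vectors of ℓᵖ and the irrationals to 0 is Riemann-integrable with integral 0; consequently ℓᵖ fails the Lebesgue property for 1 < p < ∞. -/

import Mathlib

/-!
Split a Riemann sum of mesh `< δ` by the parity of the interval index. Within one parity class
no two intervals are adjacent, so the tags are strictly increasing and the rational ones are sent
to distinct unit vectors; in `ℓᵖ` this gives
`‖∑ cᵢ e_{nᵢ}‖ᵖ = ∑ cᵢᵖ ≤ δ^(p-1) ∑ cᵢ ≤ δ^(p-1)`, which tends to `0` with `δ` because `p > 1`.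
On the other hand `f` vanishes at the irrationals and has norm `1` on the dense set of rationals,
so it is continuous at no irrational point of `[0,1]`, i.e. at almost no point.
-/

open Finset MeasureTheory

structure TaggedPartition where
  n : ℕ
  p : ℕ → ℝ
  t : ℕ → ℝ
  n_pos : 0 < n
  p_zero : p 0 = 0
  p_last : p n = 1
  p_mono : ∀ i < n, p i < p (i + 1)
  t_mem : ∀ i < n, t i ∈ Set.Icc (p i) (p (i + 1))

def TaggedPartition.MeshLt (P : TaggedPartition) (δ : ℝ) : Prop :=
  ∀ i < P.n, P.p (i + 1) - P.p i < δ

noncomputable def riemannSum {X : Type*} [NormedAddCommGroup X] [NormedSpace ℝ X]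
    (f : ℝ → X) (P : TaggedPartition) : X :=
  ∑ i ∈ Finset.range P.n, (P.p (i + 1) - P.p i) • f (P.t i)

def HasRiemannIntegral {X : Type*} [NormedAddCommGroup X] [NormedSpace ℝ X]
    (f : ℝ → X) (x : X) : Prop :=
  ∀ ε > (0 : ℝ), ∃ δ > (0 : ℝ), ∀ P : TaggedPartition, P.MeshLt δ →
    ‖x - riemannSum f P‖ < ε

def RiemannIntegrable {X : Type*} [NormedAddCommGroup X] [NormedSpace ℝ X]
    (f : ℝ → X) : Prop :=
  ∃ x, HasRiemannIntegral f x

def LebesgueProperty (X : Type*) [NormedAddCommGroup X] [NormedSpace ℝ X] : Prop :=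
  ∀ f : ℝ → X, RiemannIntegrable f →
    ∀ᵐ t ∂(MeasureTheory.volume.restrict (Set.Icc (0 : ℝ) 1)),
      ContinuousWithinAt f (Set.Icc (0 : ℝ) 1) t

/-- The rationals in `[0,1]`, as a subtype of `ℝ`. -/
def RatIn01 : Type := {t : ℝ // t ∈ Set.Icc (0 : ℝ) 1 ∧ ∃ r : ℚ, (r : ℝ) = t}


open scoped ENNReal

theorem lp.norm_sum_single_of_injOn {α ι E : Type*} [DecidableEq α] [NormedAddCommGroup E]
    {p : ℝ≥0∞} [Fact (1 ≤ p)] (hp : 0 < p.toReal) {s : Finset ι} {idx : ι → α}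
    (hidx : Set.InjOn idx s) (c : ι → E) :
    ‖∑ i ∈ s, lp.single (E := fun _ : α => E) p (idx i) (c i)‖ ^ p.toReal
      = ∑ i ∈ s, ‖c i‖ ^ p.toReal := by
  set c' : α → E := Function.extend (fun i : s => idx i) (fun i => c i) 0
  have hc' : ∀ i ∈ s, c' (idx i) = c i := fun i hi =>
    hidx.injective.extend_apply (fun i : s => c i) 0 ⟨i, hi⟩
  have hsum : ∑ i ∈ s, lp.single (E := fun _ : α => E) p (idx i) (c i)
      = ∑ k ∈ s.image idx, lp.single p k (c' k) := by
    rw [sum_image hidx]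
    exact sum_congr rfl fun i hi => by rw [hc' i hi]
  rw [hsum, lp.norm_sum_single hp, sum_image hidx]
  exact sum_congr rfl fun i hi => by rw [hc' i hi]

theorem Real.sum_rpow_le_rpow_sub_one_mul_sum {ι : Type*} {s : Finset ι} {c : ι → ℝ} {δ r : ℝ}
    (hr : 1 ≤ r) (hc : ∀ i ∈ s, c i ∈ Set.Icc 0 δ) :
    ∑ i ∈ s, c i ^ r ≤ δ ^ (r - 1) * ∑ i ∈ s, c i := by
  rw [mul_sum]
  refine sum_le_sum fun i hi => ?_
  obtain ⟨hc0, hcδ⟩ := hc i hi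
  calc c i ^ r = c i ^ (r - 1) * c i := by
        rw [← Real.rpow_add_one' hc0 (by linarith), sub_add_cancel]
    _ ≤ δ ^ (r - 1) * c i := by gcongr

namespace TaggedPartition

variable (P : TaggedPartition)

theorem strictMonoOn_p : StrictMonoOn P.p (Set.Iic P.n) :=
  strictMonoOn_Iic_of_lt_succ P.p_mono

theorem sum_widths : ∑ i ∈ range P.n, (P.p (i + 1) - P.p i) = 1 := by
  rw [sum_range_sub, P.p_last, P.p_zero, sub_zero]

theorem width_nonneg {i : ℕ} (hi : i < P.n) : 0 ≤ P.p (i + 1) - P.p i :=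
  sub_nonneg.mpr (P.p_mono i hi).le

theorem t_lt_t_of_add_one_lt {i j : ℕ} (hij : i + 1 < j) (hj : j < P.n) : P.t i < P.t j :=
  calc P.t i ≤ P.p (i + 1) := (P.t_mem i (by omega)).2
    _ < P.p j := P.strictMonoOn_p (by simp; omega) (by simp; omega) hij
    _ ≤ P.t j := (P.t_mem j hj).1

end TaggedPartition

section UnitVectors

variable {α : Type*} [DecidableEq α] {p : ℝ≥0∞} [Fact (1 ≤ p)] {A : Set ℝ} {ι : ℝ → α}
  {f : ℝ → lp (fun _ : α => ℝ) p}

theorem norm_sum_nonadjacent_rpow_le (hp : 1 ≤ p.toReal) (hι : Set.InjOn ι A)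
    (hfA : ∀ t ∈ A, f t = lp.single p (ι t) 1) (hf0 : ∀ t ∉ A, f t = 0)
    {P : TaggedPartition} {δ : ℝ} (hP : P.MeshLt δ) {s : Finset ℕ} (hs : s ⊆ range P.n)
    (hgap : ∀ i ∈ s, i + 1 ∉ s) :
    ‖∑ i ∈ s, (P.p (i + 1) - P.p i) • f (P.t i)‖ ^ p.toReal ≤ δ ^ (p.toReal - 1) := by
  classical
  set s' := s.filter (fun i => P.t i ∈ A)
  have hs' : s' ⊆ range P.n := (filter_subset _ s).trans hs
  have htags : StrictMonoOn P.t s := fun i hi j hj hij =>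
    P.t_lt_t_of_add_one_lt (lt_of_le_of_ne hij fun h => hgap i hi (h ▸ hj))
      (mem_range.mp (hs hj))
  have hinj : Set.InjOn (ι ∘ P.t) s' :=
    hι.comp (htags.injOn.mono (filter_subset _ _)) fun i hi => (mem_filter.mp hi).2
  have hsum : ∑ i ∈ s, (P.p (i + 1) - P.p i) • f (P.t i)
      = ∑ i ∈ s', lp.single p (ι (P.t i)) (P.p (i + 1) - P.p i) := by
    rw [sum_filter]
    refine sum_congr rfl fun i _ => ?_
    split_ifs with h
    · rw [hfA _ h, ← lp.single_smul, smul_eq_mul, mul_one]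
    · rw [hf0 _ h, smul_zero]
  calc ‖∑ i ∈ s, (P.p (i + 1) - P.p i) • f (P.t i)‖ ^ p.toReal
      = ∑ i ∈ s', (P.p (i + 1) - P.p i) ^ p.toReal := by
        rw [hsum]
        refine (lp.norm_sum_single_of_injOn (by linarith) hinj _).trans ?_
        exact sum_congr rfl fun i hi => by
          rw [Real.norm_of_nonneg (P.width_nonneg (mem_range.mp (hs' hi)))]
    _ ≤ δ ^ (p.toReal - 1) * ∑ i ∈ s', (P.p (i + 1) - P.p i) :=
        Real.sum_rpow_le_rpow_sub_one_mul_sum hp fun i hi =>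
          ⟨P.width_nonneg (mem_range.mp (hs' hi)), (hP i (mem_range.mp (hs' hi))).le⟩
    _ ≤ δ ^ (p.toReal - 1) * ∑ i ∈ range P.n, (P.p (i + 1) - P.p i) := by
        have hδ : 0 ≤ δ := (P.width_nonneg P.n_pos).trans (hP 0 P.n_pos).le
        exact mul_le_mul_of_nonneg_left (sum_le_sum_of_subset_of_nonneg hs'
          fun i hi _ => P.width_nonneg (mem_range.mp hi)) (Real.rpow_nonneg hδ _)
    _ = δ ^ (p.toReal - 1) := by rw [P.sum_widths, mul_one]

theorem hasRiemannIntegral_zero_of_injOn (hp : 1 < p.toReal) (hι : Set.InjOn ι A)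
    (hfA : ∀ t ∈ A, f t = lp.single p (ι t) 1) (hf0 : ∀ t ∉ A, f t = 0) :
    HasRiemannIntegral f 0 := by
  intro ε hε
  set r := p.toReal
  -- chosen so that `δ ^ (r - 1) = (ε / 3) ^ r`
  refine ⟨(ε / 3) ^ (r / (r - 1)), by positivity, fun P hP => ?_⟩
  have hclass : ∀ s ⊆ range P.n, (∀ i ∈ s, i + 1 ∉ s) →
      ‖∑ i ∈ s, (P.p (i + 1) - P.p i) • f (P.t i)‖ ≤ ε / 3 := fun s hs hgap => by
    have h := norm_sum_nonadjacent_rpow_le hp.le hι hfA hf0 hP hs hgap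
    rw [← Real.rpow_mul (by positivity), div_mul_cancel₀ _ (by linarith)] at h
    exact (Real.rpow_le_rpow_iff (norm_nonneg _) (by positivity) (by linarith)).mp h
  rw [zero_sub, norm_neg, riemannSum, ← sum_filter_add_sum_filter_not _ Even]
  calc _ ≤ _ := norm_add_le _ _
    _ ≤ ε / 3 + ε / 3 := by
        gcongr <;> refine hclass _ (filter_subset _ _) fun i hi hi' => ?_
        · exact Nat.even_add_one.mp (mem_filter.mp hi').2 (mem_filter.mp hi).2
        · exact (mem_filter.mp hi').2 (Nat.even_add_one.mpr (mem_filter.mp hi).2)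
    _ < ε := by linarith

end UnitVectors

theorem LebesgueProperty.exists_irrational_continuousWithinAt {X : Type*}
    [NormedAddCommGroup X] [NormedSpace ℝ X] (hX : LebesgueProperty X) {f : ℝ → X}
    (hf : RiemannIntegrable f) :
    ∃ t ∈ Set.Icc (0 : ℝ) 1, Irrational t ∧ ContinuousWithinAt f (Set.Icc 0 1) t := by
  have : (ae (volume.restrict (Set.Icc (0 : ℝ) 1))).NeBot := ae_neBot.mpr (by simp)
  exact ((ae_restrict_mem measurableSet_Icc).and
    (((Set.countable_range ((↑) : ℚ → ℝ)).ae_notMem _).and (hX f hf))).exists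

theorem not_continuousWithinAt_Icc_of_irrational {E : Type*} [SeminormedAddGroup E]
    {f : ℝ → E} {t : ℝ} (ht : t ∈ Set.Icc (0 : ℝ) 1) (hirr : Irrational t) (hft : f t = 0)
    (hf : ∀ r : ℚ, (r : ℝ) ∈ Set.Icc (0 : ℝ) 1 → ‖f r‖ = 1) :
    ¬ContinuousWithinAt f (Set.Icc 0 1) t := by
  intro hc
  obtain ⟨η, hη, hfη⟩ := Metric.continuousWithinAt_iff.mp hc 1 one_pos
  have ht1 : t < 1 := ht.2.lt_of_ne (by rintro rfl; exact not_irrational_one hirr)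
  obtain ⟨r, htr, hr⟩ := exists_rat_btwn (lt_min ht1 (lt_add_of_pos_right t hη))
  have hrI : (r : ℝ) ∈ Set.Icc (0 : ℝ) 1 :=
    ⟨ht.1.trans htr.le, (hr.trans_le (min_le_left _ _)).le⟩
  have hdist := hfη hrI (by
    rw [Real.dist_eq, abs_lt]
    constructor <;> linarith [min_le_right 1 (t + η)])
  rw [hft, dist_zero_right, hf r hrI] at hdist
  exact lt_irrefl _ hdist

theorem lp_unit_vector_function_riemann_integrable_and_fails_Lebesgue
    (p : ENNReal) [Fact (1 ≤ p)] (hp : 1 < p) (hp' : p < ⊤)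
    (q : ℕ ≃ RatIn01)
    (f : ℝ → lp (fun _ : ℕ => ℝ) p)
    (hf_rat : ∀ (t : ℝ) (h : t ∈ Set.Icc (0 : ℝ) 1 ∧ ∃ r : ℚ, (r : ℝ) = t),
      f t = lp.single p (q.symm ⟨t, h⟩ : ℕ) (1 : ℝ))
    (hf_irr : ∀ t : ℝ, ¬(t ∈ Set.Icc (0 : ℝ) 1 ∧ ∃ r : ℚ, (r : ℝ) = t) → f t = 0) :
    HasRiemannIntegral f 0 ∧ ¬ LebesgueProperty (lp (fun _ : ℕ => ℝ) p) := by
  classical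
  set A : Set ℝ := {t | t ∈ Set.Icc (0 : ℝ) 1 ∧ ∃ r : ℚ, (r : ℝ) = t}
  set ι : ℝ → ℕ := fun t => if h : t ∈ A then q.symm ⟨t, h⟩ else 0
  have hι : Set.InjOn ι A := fun s hs t ht hst => by
    simp only [ι, dif_pos hs, dif_pos ht] at hst
    exact congrArg Subtype.val (q.symm.injective hst)
  have hr : 1 < p.toReal := by
    simpa using (ENNReal.toReal_lt_toReal ENNReal.one_ne_top hp'.ne).mpr hp
  have hint : HasRiemannIntegral f 0 :=
    hasRiemannIntegral_zero_of_injOn hr hι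
      (fun t ht => by simp only [ι, dif_pos ht, hf_rat t ht]) hf_irr
  refine ⟨hint, fun hX => ?_⟩
  obtain ⟨t, ht, hirr, hcont⟩ := hX.exists_irrational_continuousWithinAt ⟨0, hint⟩
  refine not_continuousWithinAt_Icc_of_irrational ht hirr
    (hf_irr t fun ⟨_, r, hr⟩ => hirr ⟨r, hr⟩) (fun r hr => ?_) hcont
  rw [hf_rat r ⟨hr, r, rfl⟩, lp.norm_single (zero_lt_one.trans_le Fact.out), norm_one]
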